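/- (Bloch-vector recursion) Let ν = (𝟙 + m⃗·σ⃗)/2 for m⃗ ∈ ℝ³. Then Γ*(ν) = (𝟙 + m⃗'·σ⃗)/2 with m⃗' = m⃗ − 2μ[(n⃗×m⃗) sin h cos h − n⃗×(n⃗×m⃗) sin² h], where n⃗ := h⃗/h. -/

import Mathlib

/-!
With `h = ‖h⃗‖` and `N = n⃗·σ⃗`, one has `N² = 1`, so the exponential series splits into even and odd
parts and `U = cos h + i sin h N`. The Pauli product rule
`(a⃗·σ⃗)(b⃗·σ⃗) = a⃗·b⃗ + i (a⃗×b⃗)·σ⃗` then gives `U U* = 1` and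
`U (m⃗·σ⃗) U* = (m⃗ − 2 sin h cos h n⃗×m⃗ + 2 sin² h n⃗×(n⃗×m⃗))·σ⃗`, so `Γ*` acts on Bloch vectors as
the convex combination of the identity and this rotation.
-/

open scoped BigOperators
open Matrix Filter
open scoped ComplexOrder

noncomputable section

/-- 2×2 complex matrices: single-site operators. -/
abbrev Mat2 := Matrix (Fin 2) (Fin 2) ℂ

/-- Operators on the `N`-site Hilbert space `⊗_{j=1}^N ℂ²`, identified with
matrices indexed by configurations `Fin N → Fin 2`. -/
abbrev MatN (N : ℕ) := Matrix (Fin N → Fin 2) (Fin N → Fin 2) ℂ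

/-- Pauli matrices. -/
def σx : Mat2 := !![0, 1; 1, 0]
def σy : Mat2 := !![0, -Complex.I; Complex.I, 0]
def σz : Mat2 := !![1, 0; 0, -1]
def pauli : Fin 3 → Mat2 := ![σx, σy, σz]

/-- `m⃗ · σ⃗` for a real vector `m⃗ ∈ ℝ³`. -/
def dotPauli (m : Fin 3 → ℝ) : Mat2 := ∑ i, (m i : ℂ) • pauli i

/-- Euclidean norm on ℝ³. -/
def norm3 (v : Fin 3 → ℝ) : ℝ := Real.sqrt (∑ i, (v i) ^ 2)

/-- dot product on ℝ³. -/
def dot3 (u v : Fin 3 → ℝ) : ℝ := ∑ i, u i * v i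

/-- tensor product `⊗_j B j` of single-site matrices. -/
def tens {N : ℕ} (B : Fin N → Mat2) : MatN N := fun η η' => ∏ j, B j (η j) (η' j)

/-- `B_j = 𝟙 ⊗ ⋯ ⊗ B ⊗ ⋯ ⊗ 𝟙` with `B` at site `j`. -/
def site (N : ℕ) (j : Fin N) (B : Mat2) : MatN N :=
  tens (Function.update (fun _ => (1 : Mat2)) j B)

/-- `B_N = ∑_j B_j`. -/
def sumSite (N : ℕ) (B : Mat2) : MatN N := ∑ j, site N j B

/-- partial trace onto site `j` (reduced density matrix at site `j`). -/
def ptrace {N : ℕ} (j : Fin N) (ρ : MatN N) : Mat2 :=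
  fun a b => ∑ η : Fin N → Fin 2, if η j = a then ρ η (Function.update η j b) else 0

/-- functional calculus `f(M)` for a Hermitian matrix `M` (junk value `0` otherwise). -/
def matFun {n : Type*} [Fintype n] [DecidableEq n] (f : ℝ → ℝ) (M : Matrix n n ℂ) :
    Matrix n n ℂ :=
  if hM : M.IsHermitian then
    (hM.eigenvectorUnitary : Matrix n n ℂ) *
      Matrix.diagonal (fun i => (f (hM.eigenvalues i) : ℂ)) *
        (hM.eigenvectorUnitary : Matrix n n ℂ)ᴴ
  else 0

/-- `k_j(ε,t) = ∑_{n=1}^t ε_{(j-n) mod N}`. -/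
def kSteps (N t : ℕ) (ε : Fin N → Fin 2) (j : Fin N) : ℕ :=
  ∑ n ∈ Finset.Icc 1 t, (ε ⟨((j : ℕ) + n * (N - 1)) % N, Nat.mod_lt _ j.pos⟩ : ℕ)

/-- the unitary dynamics `U_N(t,ε) = ⊗_j U^{k_j(ε,t)}`. -/
def UN (U : Mat2) (N t : ℕ) (ε : Fin N → Fin 2) : MatN N :=
  tens (fun j => U ^ kSteps N t ε j)

/-- the set `Ω_μ^N` of scatterer configurations with `⌈μN⌉` active scatterers. -/
def OmegaSet (N : ℕ) (μ : ℝ) : Finset (Fin N → Fin 2) :=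
  Finset.univ.filter (fun ε => (∑ j, (ε j : ℕ)) = Nat.ceil (μ * N))

/-- expectation `E_μ^N` with respect to the uniform probability on `Ω_μ^N`. -/
def epsAvg (N : ℕ) (μ : ℝ) (g : (Fin N → Fin 2) → ℝ) : ℝ :=
  (∑ ε ∈ OmegaSet N μ, g ε) / (OmegaSet N μ).card

/-- the single site Hamiltonian `H = h⃗ · σ⃗`. -/
def Hmat (hv : Fin 3 → ℝ) : Mat2 := dotPauli hv

/-- `U = exp(iH)`. -/
def Umat (hv : Fin 3 → ℝ) : Mat2 := NormedSpace.exp (Complex.I • Hmat hv)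

/-- `z = 1 - μ + μ e^{i(e₊ - e₋)}` with `e₊ - e₋ = 2h`. -/
def zfac (h μ : ℝ) : ℂ := 1 - μ + μ * Complex.exp (Complex.I * (2 * h))

/-- the magnetization `m⃗_t = m⃗_e + Re[(m⃗_0 - m⃗_e + i(h⃗ × m⃗_0)/h) z^t]`, with `m⃗_e = e h⃗/h²`. -/
def mVec (hv m0 : Fin 3 → ℝ) (e μ : ℝ) (t : ℕ) (i : Fin 3) : ℝ :=
  e * hv i / (norm3 hv) ^ 2 +
    (((m0 i - e * hv i / (norm3 hv) ^ 2 : ℝ) +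
        Complex.I * ((crossProduct hv m0) i / norm3 hv)) *
      (zfac (norm3 hv) μ) ^ t).re

/-- the Heisenberg-picture effective map `Γ(A) = (1-μ)A + μ U* A U`. -/
def Gam (U : Mat2) (μ : ℝ) (A : Mat2) : Mat2 := (1 - μ) • A + μ • (Uᴴ * A * U)

/-- the Schrödinger-picture effective map `Γ*(ν) = (1-μ)ν + μ U ν U*`. -/
def GamS (U : Mat2) (μ : ℝ) (ν : Mat2) : Mat2 := (1 - μ) • ν + μ • (U * ν * Uᴴ)

/-- the density matrix with Bloch vector `m⃗`: `(𝟙 + m⃗·σ⃗)/2`. -/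
def bloch (m : Fin 3 → ℝ) : Mat2 := (2 : ℂ)⁻¹ • (1 + dotPauli m)


/-- the Bloch-vector map `m⃗ ↦ m⃗' = m⃗ − 2μ[(n⃗×m⃗) sin h cos h − n⃗×(n⃗×m⃗) sin² h]`. -/
def mprime (μ h : ℝ) (n m : Fin 3 → ℝ) : Fin 3 → ℝ := fun i =>
  m i - 2 * μ * ((crossProduct n m) i * Real.sin h * Real.cos h -
    (crossProduct n (crossProduct n m)) i * (Real.sin h) ^ 2)

open Complex

theorem exp_smul_of_mul_self_eq_one {A : Type*} [Ring A] [Algebra ℂ A] [TopologicalSpace A]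
    [IsTopologicalRing A] [ContinuousSMul ℂ A] [T2Space A] {x : A} (hx : x * x = 1) (z : ℂ) :
    NormedSpace.exp (z • x) = cosh z • 1 + sinh z • x := by
  have hx_even (k : ℕ) : x ^ (2 * k) = 1 := by rw [pow_mul, sq, hx, one_pow]
  rw [NormedSpace.exp_eq_expSeries_sum ℂ, NormedSpace.expSeries_sum_eq]
  refine HasSum.tsum_eq (HasSum.even_add_odd ?_ ?_)
  · convert (hasSum_cosh z).smul_const (1 : A) using 2 with k
    rw [smul_pow, hx_even, smul_smul, div_eq_inv_mul]
  · convert (hasSum_sinh z).smul_const x using 2 with k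
    rw [smul_pow, pow_succ x, hx_even, one_mul, smul_smul, div_eq_inv_mul]

lemma dotPauli_add (a b : Fin 3 → ℝ) : dotPauli (a + b) = dotPauli a + dotPauli b := by
  simp only [dotPauli, Pi.add_apply, ofReal_add, add_smul, Finset.sum_add_distrib]

lemma dotPauli_smul (r : ℝ) (a : Fin 3 → ℝ) : dotPauli (r • a) = (r : ℂ) • dotPauli a := by
  simp only [dotPauli, Pi.smul_apply, smul_eq_mul, ofReal_mul, mul_smul, Finset.smul_sum]

lemma dotPauli_neg (a : Fin 3 → ℝ) : dotPauli (-a) = -dotPauli a := by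
  simpa using dotPauli_smul (-1) a

lemma dotPauli_sub (a b : Fin 3 → ℝ) : dotPauli (a - b) = dotPauli a - dotPauli b := by
  rw [sub_eq_add_neg, dotPauli_add, dotPauli_neg, sub_eq_add_neg]

lemma dotPauli_zero : dotPauli 0 = 0 := by
  simpa using dotPauli_smul 0 0

lemma conjTranspose_dotPauli (a : Fin 3 → ℝ) : (dotPauli a)ᴴ = dotPauli a := by
  ext i j
  fin_cases i <;> fin_cases j <;>
    simp [dotPauli, pauli, σx, σy, σz, Fin.sum_univ_three, Matrix.conjTranspose_apply]

lemma dotPauli_mul_dotPauli (a b : Fin 3 → ℝ) :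
    dotPauli a * dotPauli b = ((a ⬝ᵥ b : ℝ) : ℂ) • 1 + I • dotPauli (a ⨯₃ b) := by
  ext i j
  fin_cases i <;> fin_cases j <;>
    simp [dotPauli, pauli, σx, σy, σz, dotProduct, cross_apply, Fin.sum_univ_three,
      Matrix.mul_apply, Fin.sum_univ_two] <;>
    ring_nf <;> simp only [I_sq] <;> ring

lemma dotPauli_mul_self {n : Fin 3 → ℝ} (hn : n ⬝ᵥ n = 1) : dotPauli n * dotPauli n = 1 := by
  rw [dotPauli_mul_dotPauli, hn, cross_self, dotPauli_zero]
  simp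

lemma dotPauli_mul_dotPauli_mul_self {n : Fin 3 → ℝ} (hn : n ⬝ᵥ n = 1) (m : Fin 3 → ℝ) :
    dotPauli n * dotPauli m * dotPauli n = dotPauli (m + (2 : ℝ) • n ⨯₃ (n ⨯₃ m)) := by
  have hperp : (n ⨯₃ m) ⬝ᵥ n = 0 := by rw [dotProduct_comm, dot_self_cross]
  rw [dotPauli_mul_dotPauli, add_mul, smul_mul_assoc, one_mul, smul_mul_assoc,
    dotPauli_mul_dotPauli, hperp, ← cross_anticomm, cross_cross_eq_smul_sub_smul', hn]
  simp only [dotPauli_add, dotPauli_sub, dotPauli_smul, dotPauli_neg, ofReal_zero, zero_smul,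
    zero_add, one_smul, smul_neg, smul_smul, I_mul_I]
  push_cast
  module

def pauliRotor (c s : ℝ) (n : Fin 3 → ℝ) : Mat2 := (c : ℂ) • 1 + ((s : ℂ) * I) • dotPauli n

lemma conjTranspose_pauliRotor (c s : ℝ) (n : Fin 3 → ℝ) :
    (pauliRotor c s n)ᴴ = pauliRotor c (-s) n := by
  simp [pauliRotor, Matrix.conjTranspose_add, Matrix.conjTranspose_smul, conjTranspose_dotPauli]

lemma pauliRotor_mul_conjTranspose {n : Fin 3 → ℝ} (hn : n ⬝ᵥ n = 1) {c s : ℝ}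
    (hcs : c ^ 2 + s ^ 2 = 1) : pauliRotor c s n * (pauliRotor c s n)ᴴ = 1 := by
  rw [conjTranspose_pauliRotor]
  simp only [pauliRotor, add_mul, mul_add, smul_mul_smul_comm, one_mul, mul_one,
    dotPauli_mul_self hn]
  have hcsC : (c : ℂ) ^ 2 + (s : ℂ) ^ 2 = 1 := by exact_mod_cast hcs
  push_cast
  linear_combination (norm := module) (hcsC - (s : ℂ) ^ 2 * I_sq) • (1 : Mat2)

lemma pauliRotor_mul_dotPauli_mul_conjTranspose {n : Fin 3 → ℝ} (hn : n ⬝ᵥ n = 1) {c s : ℝ}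
    (hcs : c ^ 2 + s ^ 2 = 1) (m : Fin 3 → ℝ) :
    pauliRotor c s n * dotPauli m * (pauliRotor c s n)ᴴ =
      dotPauli (m - (2 * s * c) • n ⨯₃ m + (2 * s ^ 2) • n ⨯₃ (n ⨯₃ m)) := by
  rw [conjTranspose_pauliRotor]
  simp only [pauliRotor, add_mul, mul_add, smul_mul_assoc, mul_smul_comm, one_mul, mul_one]
  rw [dotPauli_mul_dotPauli_mul_self hn, dotPauli_mul_dotPauli, dotPauli_mul_dotPauli,
    ← cross_anticomm n m, dotProduct_comm m n]
  simp only [dotPauli_add, dotPauli_sub, dotPauli_smul, dotPauli_neg, smul_smul, smul_add,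
    smul_neg]
  have hcsC : (c : ℂ) ^ 2 + (s : ℂ) ^ 2 = 1 := by exact_mod_cast hcs
  push_cast
  linear_combination (norm := module) (hcsC - (s : ℂ) ^ 2 * I_sq) • dotPauli m +
    ((2 * c * s : ℂ) * I_sq) • dotPauli (n ⨯₃ m) -
    ((2 * s ^ 2 : ℂ) * I_sq) • dotPauli (n ⨯₃ (n ⨯₃ m))

lemma mul_bloch_mul_eq_bloch {U : Mat2} (hU : U * Uᴴ = 1) {m m' : Fin 3 → ℝ}
    (hm : U * dotPauli m * Uᴴ = dotPauli m') : U * bloch m * Uᴴ = bloch m' := by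
  rw [bloch, bloch, mul_smul_comm, smul_mul_assoc, mul_add, add_mul, mul_one, hU, hm]

lemma smul_bloch_add_smul_bloch (μ : ℝ) (a b : Fin 3 → ℝ) :
    (1 - μ) • bloch a + μ • bloch b = bloch ((1 - μ) • a + μ • b) := by
  simp only [bloch, dotPauli_add, dotPauli_smul, ← coe_smul]
  module

lemma norm3_sq (v : Fin 3 → ℝ) : norm3 v ^ 2 = ∑ i, v i ^ 2 :=
  Real.sq_sqrt (Finset.sum_nonneg fun i _ => sq_nonneg (v i))

lemma norm3_pos {v : Fin 3 → ℝ} (hv : v ≠ 0) : 0 < norm3 v := by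
  refine Real.sqrt_pos.mpr ?_
  obtain ⟨i, hi⟩ := Function.ne_iff.mp hv
  exact Finset.sum_pos' (fun j _ => sq_nonneg _) ⟨i, Finset.mem_univ i, sq_pos_of_ne_zero hi⟩

lemma dotProduct_self_div_norm3 {v : Fin 3 → ℝ} (hv : v ≠ 0) :
    (fun i => v i / norm3 v) ⬝ᵥ (fun i => v i / norm3 v) = 1 := by
  have hne : norm3 v ^ 2 ≠ 0 := (pow_pos (norm3_pos hv) 2).ne'
  simp only [dotProduct, ← sq, div_pow, ← Finset.sum_div]
  rw [div_eq_one_iff_eq hne, norm3_sq]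

lemma Umat_eq_pauliRotor {hv : Fin 3 → ℝ} (hhv : hv ≠ 0) :
    Umat hv =
      pauliRotor (Real.cos (norm3 hv)) (Real.sin (norm3 hv)) (fun i => hv i / norm3 hv) := by
  have hv_eq : hv = norm3 hv • fun i => hv i / norm3 hv := by
    ext i; simp [mul_div_cancel₀ _ (norm3_pos hhv).ne']
  rw [Umat, Hmat, hv_eq, dotPauli_smul, smul_smul, mul_comm, ← hv_eq,
    exp_smul_of_mul_self_eq_one (dotPauli_mul_self (dotProduct_self_div_norm3 hhv)),
    cosh_mul_I, sinh_mul_I, ← ofReal_cos, ← ofReal_sin, pauliRotor]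

theorem kac_bloch_recursion_general
    (hv : Fin 3 → ℝ) (hhv : hv ≠ 0) (μ : ℝ)
    (m : Fin 3 → ℝ) :
    GamS (Umat hv) μ (bloch m) =
      bloch (mprime μ (norm3 hv) (fun i => hv i / norm3 hv) m) := by
  have hn := dotProduct_self_div_norm3 hhv
  have hcs := Real.cos_sq_add_sin_sq (norm3 hv)
  rw [GamS, Umat_eq_pauliRotor hhv,
    mul_bloch_mul_eq_bloch (pauliRotor_mul_conjTranspose hn hcs)
      (pauliRotor_mul_dotPauli_mul_conjTranspose hn hcs m), smul_bloch_add_smul_bloch]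
  congr 1
  ext i
  simp only [mprime, Pi.add_apply, Pi.sub_apply, Pi.smul_apply, smul_eq_mul]
  ring

/-- **Bloch-vector recursion.** If `ν = (𝟙 + m⃗·σ⃗)/2` then
`Γ*(ν) = (𝟙 + m⃗'·σ⃗)/2` with
`m⃗' = m⃗ − 2μ[(n⃗×m⃗) sin h cos h − n⃗×(n⃗×m⃗) sin² h]` and `n⃗ = h⃗/h`. -/
theorem kac_bloch_recursion
    (hv : Fin 3 → ℝ) (hhv : hv ≠ 0) (μ : ℝ) (hμ : μ ∈ Set.Icc (0 : ℝ) 1)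
    (m : Fin 3 → ℝ) :
    GamS (Umat hv) μ (bloch m) =
      bloch (mprime μ (norm3 hv) (fun i => hv i / norm3 hv) m) :=
  kac_bloch_recursion_general hv hhv μ m
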